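/- Let s ≥ 1, 0 ≤ λ ≤ s, N = 7s + 5, and write the entries of d_{λ,s−λ} as d_1, …, d_{7s}. Then Σ over all triples 1 ≤ k_1 < k_2 < k_3 ≤ 7s of C(N + 87 − d_{k_1} − d_{k_2} − d_{k_3}, N) equals λ·C(s−λ,2) + (1/6)(λ−2)(λ−1)λ + (λ(λ−1)(s−λ)/2)·C(N+1, N) + λ·C(s−λ,2)·C(N+2, N) + (1/6)(s−λ−2)(s−λ−1)(s−λ)·C(N+3, N). -/

import Mathlib

/-!
Since `C(N + 87 - m, N) = 0` for `m ≥ 88`, only triples of entries with sum at most `87`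
contribute. Every entry is at least `28`, and all entries other than `31, 29` in `d` and `28`
in `d′` are at least `33`, so a triple meeting one of them sums to at least `89`. What remains is
a sum over the triples of the multiset `λ • {31, 29} + μ • {28}`, which Vandermonde's rule for
sub-multisets of a sum evaluates: the surviving triples are `{29, 29, 29}` and `{31, 28, 28}`
(sum `87`), `{29, 29, 28}` (`86`), `{29, 28, 28}` (`85`) and `{28, 28, 28}` (`84`).
-/

/-- Binomial coefficient `C(m, N)` for an integer `m`, with the convention
`C(m, N) = 0` whenever `m < N`. -/
def intChoose (m : ℤ) (N : ℕ) : ℤ :=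
  if m < (N : ℤ) then 0 else (m.toNat.choose N : ℤ)

def dA : List ℕ := [88, 77, 72, 54, 48, 31, 29]
def dB : List ℕ := [87, 81, 64, 62, 44, 33, 28]

/-- The composed multidegree `d_{λ,μ}`: `λ` copies of `d` followed by `μ` copies of `d′`. -/
def dcomp (lam mu : ℕ) : List ℕ :=
  (List.replicate lam dA).flatten ++ (List.replicate mu dB).flatten

open Finset

namespace Multiset

variable {α β : Type*} [AddCommMonoid β]

theorem sum_map_powersetCard_add (F : Multiset α → β) (s t : Multiset α) (n : ℕ) :
    ((powersetCard n (s + t)).map F).sum =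
      ∑ p ∈ HasAntidiagonal.antidiagonal n, ((powersetCard p.1 s).map fun P =>
        ((powersetCard p.2 t).map fun Q => F (P + Q)).sum).sum := by
  induction s using Multiset.induction generalizing n F with
  | empty =>
    rw [Finset.Nat.sum_antidiagonal_eq_sum_range_succ_mk, Finset.sum_range_succ']
    simp [powersetCard_zero_right]
  | cons a s ih =>
    cases n with
    | zero => simp
    | succ n =>
      rw [cons_add, powersetCard_cons, map_add, sum_add, map_map, ih, Function.comp_def, ih,
        Finset.Nat.sum_antidiagonal_succ, Finset.Nat.sum_antidiagonal_succ, add_assoc,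
        ← Finset.sum_add_distrib]
      simp [cons_add]

theorem powersetCard_replicate (k n : ℕ) (a : α) :
    powersetCard k (replicate n a) = replicate (n.choose k) (replicate k a) := by
  refine eq_replicate.2 ⟨by simp, fun M hM => ?_⟩
  obtain ⟨hle, hcard⟩ := mem_powersetCard.1 hM
  obtain ⟨j, -, rfl⟩ := le_replicate_iff.1 hle
  rw [card_replicate] at hcard
  rw [hcard]

theorem sum_map_powersetCard_add_eq_of_forall_le {s t : Multiset ℕ} {a c k : ℕ} {G : ℕ → β}
    (hs : ∀ x ∈ s, a ≤ x) (ht : ∀ x ∈ t, a + c ≤ x) (hG : ∀ m, k * a + c ≤ m → G m = 0) :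
    ((powersetCard k (s + t)).map (G ∘ sum)).sum = ((powersetCard k s).map (G ∘ sum)).sum := by
  rw [sum_map_powersetCard_add, Finset.sum_eq_single_of_mem (k, 0) (by simp)]
  · simp
  rintro ⟨i, j⟩ hij hne
  obtain rfl : i + j = k := by simpa using hij
  obtain ⟨j, rfl⟩ : ∃ j', j = j' + 1 := Nat.exists_eq_add_one_of_ne_zero (by rintro rfl; simp at hne)
  refine sum_eq_zero fun x hx => ?_
  obtain ⟨P, hP, rfl⟩ := mem_map.1 hx
  refine sum_eq_zero fun y hy => ?_
  obtain ⟨Q, hQ, rfl⟩ := mem_map.1 hy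
  obtain ⟨hPs, rfl⟩ := mem_powersetCard.1 hP
  obtain ⟨hQt, hQcard⟩ := mem_powersetCard.1 hQ
  have hPsum := card_nsmul_le_sum fun x hx => hs x (mem_of_le hPs hx)
  have hQsum := card_nsmul_le_sum fun x hx => ht x (mem_of_le hQt hx)
  rw [smul_eq_mul] at hPsum
  rw [hQcard, smul_eq_mul] at hQsum
  rw [Function.comp_apply, sum_add]
  exact hG _ (by nlinarith)

end Multiset

theorem List.map_getD_range_length {α : Type*} (L : List α) (d : α) :
    (List.range L.length).map (L.getD · d) = L := by
  refine List.ext_getElem (by simp) fun i _ hi => ?_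
  simp [List.getElem?_eq_getElem hi]

theorem Finset.sum_powersetCard_range_length {α β : Type*} [AddCommMonoid β] (L : List α) (d : α)
    (k : ℕ) (G : Multiset α → β) :
    ∑ S ∈ (range L.length).powersetCard k, G (S.val.map (L.getD · d)) =
      ((Multiset.powersetCard k (L : Multiset α)).map G).sum := by
  have hL : (range L.length).val.map (L.getD · d) = L := by
    rw [Finset.range_val, Multiset.range, Multiset.map_coe, List.map_getD_range_length]
  rw [Finset.sum_eq_multiset_sum, ← hL, Multiset.powersetCard_map, ← map_val_val_powersetCard,
    Multiset.map_map, Multiset.map_map]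
  rfl

theorem Nat.cast_choose_three {K : Type*} [Field K] [CharZero K] (a : ℕ) :
    (a.choose 3 : K) = a * (a - 1) * (a - 2) / 6 := by
  rw [Nat.cast_choose_eq_descPochhammer_div]
  simp [descPochhammer_succ_right, Nat.factorial]

theorem intChoose_of_lt {m : ℤ} {N : ℕ} (h : m < N) : intChoose m N = 0 := if_pos h

theorem intChoose_self (N : ℕ) : intChoose N N = 1 := by
  simp [intChoose]

theorem coe_dcomp (lam mu : ℕ) :
    (dcomp lam mu : Multiset ℕ) = (lam • {31, 29} + mu • {28})
      + (lam • {88, 77, 72, 54, 48} + mu • {87, 81, 64, 62, 44, 33}) := by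
  simp only [dcomp, ← Multiset.coe_add, ← Multiset.coe_join, List.map_replicate,
    Multiset.coe_replicate, Multiset.join, Multiset.sum_replicate]
  rw [show (dA : Multiset ℕ) = {31, 29} + {88, 77, 72, 54, 48} by decide,
    show (dB : Multiset ℕ) = {28} + {87, 81, 64, 62, 44, 33} by decide, nsmul_add, nsmul_add,
    add_add_add_comm]

theorem length_dcomp (lam mu : ℕ) : (dcomp lam mu).length = 7 * lam + 7 * mu := by
  rw [← Multiset.coe_card, coe_dcomp]
  simp only [Multiset.card_add, Multiset.card_nsmul, Multiset.insert_eq_cons,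
    Multiset.card_cons, Multiset.card_singleton]
  ring

theorem sum_map_powersetCard_three_low_entries {β : Type*} [AddCommMonoid β] (G : ℕ → β)
    (l m : ℕ) (hG : ∀ n, 88 ≤ n → G n = 0) :
    ((Multiset.powersetCard 3 (l • {31, 29} + m • {28})).map (G ∘ Multiset.sum)).sum =
      (l.choose 3 + l * m.choose 2) • G 87 + (l.choose 2 * m) • G 86 + (l * m.choose 2) • G 85
        + m.choose 3 • G 84 := by
  rw [show ({31, 29} : Multiset ℕ) = {31} + {29} from rfl, nsmul_add]
  simp only [Multiset.nsmul_singleton, Multiset.sum_map_powersetCard_add,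
    Multiset.powersetCard_replicate, Multiset.map_replicate, Multiset.sum_replicate,
    Finset.Nat.sum_antidiagonal_succ, Finset.Nat.antidiagonal_zero, Finset.sum_singleton,
    Function.comp_apply, Multiset.sum_add, smul_eq_mul]
  norm_num [hG, smul_smul, add_smul]
  abel

theorem stmt18_general (s lam : ℕ) (hlam : lam ≤ s) :
    ((∑ S ∈ (Finset.range (7 * s)).powersetCard 3,
        intChoose (((7 * s + 5 : ℕ) : ℤ) + 87
          - ∑ k ∈ S, ((dcomp lam (s - lam)).getD k 0 : ℤ)) (7 * s + 5) : ℤ) : ℚ)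
      = (lam : ℚ) * (((s : ℚ) - lam) * ((s : ℚ) - lam - 1) / 2)
        + (1 / 6) * ((lam : ℚ) - 2) * ((lam : ℚ) - 1) * (lam : ℚ)
        + ((lam : ℚ) * ((lam : ℚ) - 1) * ((s : ℚ) - lam) / 2)
          * (intChoose (((7 * s + 5 : ℕ) : ℤ) + 1) (7 * s + 5) : ℚ)
        + (lam : ℚ) * (((s : ℚ) - lam) * ((s : ℚ) - lam - 1) / 2)
          * (intChoose (((7 * s + 5 : ℕ) : ℤ) + 2) (7 * s + 5) : ℚ)
        + (1 / 6) * ((s : ℚ) - lam - 2) * ((s : ℚ) - lam - 1) * ((s : ℚ) - lam)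
          * (intChoose (((7 * s + 5 : ℕ) : ℤ) + 3) (7 * s + 5) : ℚ) := by
  set N := 7 * s + 5
  set mu := s - lam with hmu
  set G : ℕ → ℚ := fun m => (intChoose (N + 87 - m) N : ℚ)
  have hG : ∀ m, 88 ≤ m → G m = 0 := fun m hm => by
    simp only [G, intChoose_of_lt (by omega : (N : ℤ) + 87 - m < N), Int.cast_zero]
  have hsummand (S : Finset ℕ) :
      ((intChoose (N + 87 - ∑ k ∈ S, ((dcomp lam mu).getD k 0 : ℤ)) N : ℤ) : ℚ) =
        (G ∘ Multiset.sum) (S.val.map ((dcomp lam mu).getD · 0)) := by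
    rw [Function.comp_apply, ← Nat.cast_sum]
    rfl
  rw [Int.cast_sum, Finset.sum_congr rfl fun S _ => hsummand S,
    show 7 * s = (dcomp lam mu).length by rw [length_dcomp]; omega,
    Finset.sum_powersetCard_range_length, coe_dcomp,
    Multiset.sum_map_powersetCard_add_eq_of_forall_le (a := 28) (c := 5) ?low ?high
      (fun m hm => hG m (by omega)), sum_map_powersetCard_three_low_entries G lam mu hG]
  case low => intro x hx; simp [Multiset.mem_nsmul] at hx; omega
  case high => intro x hx; simp [Multiset.mem_nsmul] at hx; omega
  have hmuq : (mu : ℚ) = s - lam := by rw [hmu, Nat.cast_sub hlam]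
  simp only [G, nsmul_eq_mul]
  norm_num [intChoose_self, Nat.cast_choose_two, Nat.cast_choose_three, hmuq]
  rw [show (N : ℤ) + 87 - 86 = N + 1 by ring, show (N : ℤ) + 87 - 85 = N + 2 by ring,
    show (N : ℤ) + 87 - 84 = N + 3 by ring]
  ring

theorem stmt18 (s lam : ℕ) (hs : 1 ≤ s) (hlam : lam ≤ s) :
    ((∑ S ∈ (Finset.range (7 * s)).powersetCard 3,
        intChoose (((7 * s + 5 : ℕ) : ℤ) + 87
          - ∑ k ∈ S, ((dcomp lam (s - lam)).getD k 0 : ℤ)) (7 * s + 5) : ℤ) : ℚ)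
      = (lam : ℚ) * (((s : ℚ) - lam) * ((s : ℚ) - lam - 1) / 2)
        + (1 / 6) * ((lam : ℚ) - 2) * ((lam : ℚ) - 1) * (lam : ℚ)
        + ((lam : ℚ) * ((lam : ℚ) - 1) * ((s : ℚ) - lam) / 2)
          * (intChoose (((7 * s + 5 : ℕ) : ℤ) + 1) (7 * s + 5) : ℚ)
        + (lam : ℚ) * (((s : ℚ) - lam) * ((s : ℚ) - lam - 1) / 2)
          * (intChoose (((7 * s + 5 : ℕ) : ℤ) + 2) (7 * s + 5) : ℚ)
        + (1 / 6) * ((s : ℚ) - lam - 2) * ((s : ℚ) - lam - 1) * ((s : ℚ) - lam)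
          * (intChoose (((7 * s + 5 : ℕ) : ℤ) + 3) (7 * s + 5) : ℚ) :=
  stmt18_general s lam hlam
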